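/- Let G be a group with a fixed finite generating set and associated word metric d_G, and let {g₁P₁, …, g_kP_k} be a finite collection of left cosets of subgroups of G. Then the subgroup ⋂_{i=1}^k g_iP_ig_i⁻¹ is infinite if and only if there exists r > 0 such that the set ⋂_{i=1}^k N_r(g_iP_i) is unbounded in (G, d_G) (equivalently, infinite). -/

import Mathlib

open scoped Pointwise ENNReal NNReal

namespace CIC

variable {G : Type*} [Group G] {H : Type*} [Group H]

/-- Word length of `g` with respect to the generating set `S`: the least `n` such that `g`
is a product of `n` elements of `S ∪ S⁻¹`. -/
noncomputable def wordLength (S : Set G) (g : G) : ℕ :=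
  sInf {n | ∃ l : List G, (∀ x ∈ l, x ∈ S ∨ x⁻¹ ∈ S) ∧ l.length = n ∧ l.prod = g}

/-- The word metric on `G` associated to the generating set `S`. -/
noncomputable def wdist (S : Set G) (g h : G) : ℕ := wordLength S (g⁻¹ * h)

/-- Closed `r`-neighborhood of `A` with respect to the word metric of `S`. -/
def nbhd (S : Set G) (r : ℝ) (A : Set G) : Set G :=
  {x | ∃ a ∈ A, (wdist S a x : ℝ) ≤ r}

/-- Hausdorff distance between subsets of `G`, valued in `[0,∞]`: the infimum of those
`r ≥ 0` such that each set is contained in the closed `r`-neighborhood of the other,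
the infimum of the empty set being `∞`. -/
noncomputable def hdist (S : Set G) (A B : Set G) : ℝ≥0∞ :=
  ⨅ (r : ℝ≥0) (_ : A ⊆ nbhd S (r : ℝ) B ∧ B ⊆ nbhd S (r : ℝ) A), (r : ℝ≥0∞)

/-- The conjugate subgroup `g P g⁻¹`. -/
def conj (g : G) (P : Subgroup G) : Subgroup G := P.map (MulAut.conj g).toMonoidHom

/-- The set `G/𝒫` of all left cosets `gP` with `g ∈ G` and `P ∈ 𝒫`. -/
def cosets (Ps : Finset (Subgroup G)) : Set (Set G) :=
  {A | ∃ (g : G) (P : Subgroup G), P ∈ Ps ∧ A = g • (P : Set G)}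

/-- A group pair `(G, 𝒫)`: `S` is a finite generating set of `G` and `𝒫` is a finite
collection of infinite subgroups of `G`. -/
structure IsGroupPair (S : Finset G) (Ps : Finset (Subgroup G)) : Prop where
  generates : Subgroup.closure (S : Set G) = ⊤
  infinite : ∀ P ∈ Ps, (P : Set G).Infinite

/-- An `(L,C,M)`-quasi-isometry of group pairs `q : (G,𝒫) → (H,𝒬)`. -/
structure IsPairQI (S : Finset G) (T : Finset H)
    (Ps : Finset (Subgroup G)) (Qs : Finset (Subgroup H))
    (L C M : ℝ≥0) (q : G → H) : Prop where
  one_le : 1 ≤ L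
  lower : ∀ a b : G, (wdist (S : Set G) a b : ℝ) / L - C ≤ (wdist (T : Set H) (q a) (q b) : ℝ)
  upper : ∀ a b : G, (wdist (T : Set H) (q a) (q b) : ℝ) ≤ L * (wdist (S : Set G) a b : ℝ) + C
  dense : ∀ y : H, ∃ x : G, (wdist (T : Set H) (q x) y : ℝ) ≤ C
  coset_fwd : ∀ A ∈ cosets Ps, ∃ B ∈ cosets Qs, hdist (T : Set H) (q '' A) B < (M : ℝ≥0∞)
  coset_bwd : ∀ B ∈ cosets Qs, ∃ A ∈ cosets Ps, hdist (T : Set H) (q '' A) B < (M : ℝ≥0∞)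

/-!
If `x = gᵢpᵢgᵢ⁻¹` with `pᵢ ∈ Pᵢ` for every `i`, then `x` is at distance `|gᵢ⁻¹|_S` from `gᵢpᵢ`,
so the intersection of the conjugates sits inside `⋂ᵢ N_r(gᵢPᵢ)` for large `r`.
Conversely every `x ∈ ⋂ᵢ N_r(gᵢPᵢ)` can be written `x = aᵢsᵢ` with `aᵢ ∈ gᵢPᵢ` and `sᵢ` in the
finite `r`-ball around `1`. By pigeonhole infinitely many such `x` share the same tuple `(sᵢ)`,
and for two of them `x y⁻¹ = aᵢ bᵢ⁻¹ ∈ gᵢPᵢgᵢ⁻¹` for every `i`.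
-/

lemma exists_list_length_eq_wordLength {S : Set G} (hS : Subgroup.closure S = ⊤) (g : G) :
    ∃ l : List G, (∀ x ∈ l, x ∈ S ∪ S⁻¹) ∧ l.length = wordLength S g ∧ l.prod = g := by
  have hg : g ∈ Submonoid.closure (S ∪ S⁻¹) := by
    rw [← Subgroup.closure_toSubmonoid, hS]
    trivial
  obtain ⟨l, hl, hprod⟩ := Submonoid.exists_list_of_mem_closure hg
  have hne : {n | ∃ l : List G, (∀ x ∈ l, x ∈ S ∨ x⁻¹ ∈ S) ∧ l.length = n ∧ l.prod = g}.Nonempty :=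
    ⟨l.length, l, hl, rfl, hprod⟩
  exact Nat.sInf_mem hne

lemma finite_setOf_wordLength_le {S : Set G} (hSfin : S.Finite) (hS : Subgroup.closure S = ⊤)
    (n : ℕ) : {s : G | wordLength S s ≤ n}.Finite := by
  have : Finite ↥(S ∪ S⁻¹) := (hSfin.union hSfin.inv).to_subtype
  refine ((List.finite_length_le ↥(S ∪ S⁻¹) n).image fun l => (l.map (↑)).prod).subset ?_
  intro s hs
  obtain ⟨l, hl, hlen, rfl⟩ := exists_list_length_eq_wordLength hS s
  lift l to List ↥(S ∪ S⁻¹) using hl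
  refine ⟨l, ?_, rfl⟩
  change l.length ≤ n
  rw [← List.length_map (f := Subtype.val), hlen]
  exact hs

lemma nbhd_mono (S : Set G) (A : Set G) {r r' : ℝ} (h : r ≤ r') : nbhd S r A ⊆ nbhd S r' A :=
  fun _ ⟨a, ha, hd⟩ => ⟨a, ha, hd.trans h⟩

lemma conj_subset_nbhd (S : Set G) (g : G) (P : Subgroup G) :
    (conj g P : Set G) ⊆ nbhd S (wordLength S g⁻¹) (g • (P : Set G)) := by
  rintro _ ⟨p, hp, rfl⟩
  refine ⟨g * p, ⟨p, hp, rfl⟩, le_of_eq ?_⟩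
  simp [wdist, mul_assoc]

lemma mul_inv_mem_conj {g a b : G} {P : Subgroup G} (ha : a ∈ g • (P : Set G))
    (hb : b ∈ g • (P : Set G)) : a * b⁻¹ ∈ conj g P := by
  obtain ⟨p, hp, rfl⟩ := ha
  obtain ⟨q, hq, rfl⟩ := hb
  exact ⟨p * q⁻¹, mul_mem hp (inv_mem hq), by simp [mul_assoc]⟩

lemma infinite_of_forall_mul_inv_mem {K : Subgroup G} {A : Set G} (hA : A.Infinite)
    (h : ∀ x ∈ A, ∀ y ∈ A, x * y⁻¹ ∈ K) : (K : Set G).Infinite := by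
  obtain ⟨y, hy⟩ := hA.nonempty
  refine (hA.image (mul_left_injective y⁻¹).injOn).mono ?_
  rintro _ ⟨x, hx, rfl⟩
  exact h x hx y hy

variable {ι : Type*}

lemma iInf_conj_subset_iInter_nbhd (S : Set G) (g : ι → G) (P : ι → Subgroup G) {r : ℝ}
    (hr : ∀ i, (wordLength S (g i)⁻¹ : ℝ) ≤ r) :
    ((⨅ i, conj (g i) (P i) : Subgroup G) : Set G) ⊆ ⋂ i, nbhd S r (g i • (P i : Set G)) :=
  fun _ hx => Set.mem_iInter.2 fun i =>
    nbhd_mono S _ (hr i) (conj_subset_nbhd S (g i) (P i) (Subgroup.mem_iInf.1 hx i))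

lemma infinite_iInf_conj_of_infinite_iInter_nbhd [Finite ι] {S : Set G} (hSfin : S.Finite)
    (hS : Subgroup.closure S = ⊤) (g : ι → G) (P : ι → Subgroup G) (r : ℝ)
    (h : (⋂ i, nbhd S r (g i • (P i : Set G))).Infinite) :
    ((⨅ i, conj (g i) (P i) : Subgroup G) : Set G).Infinite := by
  set B := {s : G | wordLength S s ≤ ⌈r⌉₊}
  have : Finite B := (finite_setOf_wordLength_le hSfin hS _).to_subtype
  have hcover : ⋂ i, nbhd S r (g i • (P i : Set G)) ⊆
      ⋃ σ : ι → B, {x | ∀ i, x * (σ i : G)⁻¹ ∈ g i • (P i : Set G)} := by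
    intro x hx
    choose a ha hnear using Set.mem_iInter.1 hx
    refine Set.mem_iUnion.2 ⟨fun i => ⟨(a i)⁻¹ * x, ?_⟩, fun i => by simpa using ha i⟩
    exact Nat.cast_le.1 ((hnear i).trans (Nat.le_ceil r))
  obtain ⟨σ, hσ⟩ : ∃ σ : ι → B, {x | ∀ i, x * (σ i : G)⁻¹ ∈ g i • (P i : Set G)}.Infinite := by
    by_contra! hfin
    exact h ((Set.finite_iUnion hfin).subset hcover)
  refine infinite_of_forall_mul_inv_mem hσ fun x hx y hy => Subgroup.mem_iInf.2 fun i => ?_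
  simpa [mul_assoc] using mul_inv_mem_conj (hx i) (hy i)

/-- For left cosets `g₁P₁, …, g_kP_k` of subgroups of `G`, the subgroup `⋂ᵢ gᵢPᵢgᵢ⁻¹` is
infinite iff for some `r > 0` the set `⋂ᵢ N_r(gᵢPᵢ)` is infinite (equivalently, unbounded,
since the word metric is locally finite). -/
theorem statement9 (S : Finset G) (hS : Subgroup.closure (S : Set G) = ⊤)
    (k : ℕ) (g : Fin k → G) (P : Fin k → Subgroup G) :
    ((⨅ i, conj (g i) (P i) : Subgroup G) : Set G).Infinite ↔
      ∃ r : ℝ, 0 < r ∧ (⋂ i, nbhd (S : Set G) r (g i • (P i : Set G))).Infinite := by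
  constructor
  · intro hK
    set m := Finset.univ.sup fun i => wordLength (S : Set G) (g i)⁻¹
    refine ⟨m + 1, by positivity, hK.mono (iInf_conj_subset_iInter_nbhd _ g P fun i => ?_)⟩
    have : wordLength (S : Set G) (g i)⁻¹ ≤ m :=
      Finset.le_sup (f := fun i => wordLength (S : Set G) (g i)⁻¹) (Finset.mem_univ i)
    exact (Nat.cast_le.2 this).trans (le_add_of_nonneg_right zero_le_one)
  · rintro ⟨r, -, hT⟩
    exact infinite_iInf_conj_of_infinite_iInter_nbhd S.finite_toSet hS g P r hT

end CIC
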